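/- For every real n×d matrix Z, every vector y ∈ ℝⁿ, and every real σ > 0, one has yᵀ (Z Zᵀ + σ² Iₙ)⁻¹ y + log det(Z Zᵀ + σ² Iₙ) = (min over w ∈ ℝᵈ of (1/σ²)‖Z w − y‖² + ‖w‖²) + log det(Zᵀ Z + σ² I_d) + (n − d) · log(σ²), where the minimum is attained. -/

import Mathlib

/-!
With `A = ZᵀZ + σ²I` and `B = ZZᵀ + σ²I`, let `w₀ = A⁻¹Zᵀy` be the ridge solution. The residual
satisfies `B (y - Z w₀) = σ² y`, so `yᵀB⁻¹y = σ⁻²(yᵀy - (Zᵀy)ᵀw₀)`, and completing the square gives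
`σ⁻²‖Zw - y‖² + ‖w‖² = yᵀB⁻¹y + σ⁻²(w - w₀)ᵀA(w - w₀)`: the minimum is `yᵀB⁻¹y`, attained at `w₀`.
The determinants are related by the Weinstein–Aronszajn identity `σ^{2d} det B = σ^{2n} det A`.
-/

open Matrix

namespace Matrix

variable {m n R : Type*} [Fintype m] [Fintype n]

-- The rectangular `charpoly_mul_comm'` evaluated at `-s`, so `s` need not be invertible.
theorem det_mul_add_smul_one_mul_pow [DecidableEq m] [DecidableEq n] [CommRing R]
    (A : Matrix m n R) (B : Matrix n m R) (s : R) :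
    (A * B + s • 1).det * s ^ Fintype.card n = (B * A + s • 1).det * s ^ Fintype.card m := by
  have h := congrArg (Polynomial.eval (-s)) (charpoly_mul_comm' A B)
  simp only [Polynomial.eval_mul, Polynomial.eval_pow, Polynomial.eval_X, eval_charpoly,
    scalar_apply, ← smul_one_eq_diagonal, neg_smul, ← neg_add', det_neg, neg_pow s] at h
  rw [add_comm (s • _), add_comm (s • _)] at h
  apply ((isUnit_neg_one (α := R)).pow (Fintype.card m + Fintype.card n)).mul_left_cancel
  linear_combination h

theorem IsSymm.sub_dotProduct_mulVec_sub_of_mulVec_eq [CommRing R] {A : Matrix n n R}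
    (hA : A.IsSymm) {w₀ b : n → R} (hw₀ : A *ᵥ w₀ = b) (w : n → R) :
    (w - w₀) ⬝ᵥ A *ᵥ (w - w₀) = w ⬝ᵥ A *ᵥ w - 2 * (b ⬝ᵥ w) + b ⬝ᵥ w₀ := by
  have hswap : ∀ u, u ⬝ᵥ A *ᵥ w₀ = b ⬝ᵥ u := fun u => by rw [hw₀, dotProduct_comm]
  have hsymm : w₀ ⬝ᵥ A *ᵥ w = w ⬝ᵥ A *ᵥ w₀ := by
    rw [dotProduct_mulVec, ← mulVec_transpose, hA.eq, dotProduct_comm]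
  rw [mulVec_sub, sub_dotProduct, dotProduct_sub, dotProduct_sub, hsymm, hswap, hswap]
  ring

section Ridge

variable [DecidableEq n] [CommRing R] (Z : Matrix m n R) (y : m → R) (s : R)

theorem dotProduct_sub_self_add_smul_dotProduct (w : n → R) :
    (Z *ᵥ w - y) ⬝ᵥ (Z *ᵥ w - y) + s * (w ⬝ᵥ w)
      = w ⬝ᵥ (Zᵀ * Z + s • 1) *ᵥ w - 2 * ((Zᵀ *ᵥ y) ⬝ᵥ w) + y ⬝ᵥ y := by
  have hcross : (Z *ᵥ w) ⬝ᵥ y = (Zᵀ *ᵥ y) ⬝ᵥ w := by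
    rw [dotProduct_comm, dotProduct_mulVec, ← mulVec_transpose]
  rw [add_mulVec, ← mulVec_mulVec, dotProduct_add, dotProduct_mulVec _ Zᵀ, ← mulVec_transpose,
    transpose_transpose, smul_mulVec, one_mulVec, dotProduct_smul, smul_eq_mul, sub_dotProduct,
    dotProduct_sub, dotProduct_sub, dotProduct_comm y, hcross]
  ring

theorem mul_transpose_add_smul_one_mulVec_sub [DecidableEq m] {w₀ : n → R}
    (hw₀ : (Zᵀ * Z + s • 1) *ᵥ w₀ = Zᵀ *ᵥ y) :
    (Z * Zᵀ + s • 1) *ᵥ (y - Z *ᵥ w₀) = s • y := by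
  have hZ : Z *ᵥ ((Zᵀ * Z + s • 1) *ᵥ w₀) = (Z * Zᵀ) *ᵥ (Z *ᵥ w₀) + s • Z *ᵥ w₀ := by
    simp only [mulVec_mulVec, add_mulVec, mulVec_add, smul_mulVec, one_mulVec, mulVec_smul,
      Matrix.mul_assoc]
  rw [hw₀, mulVec_mulVec] at hZ
  rw [mulVec_sub, add_mulVec, add_mulVec, smul_mulVec, smul_mulVec, one_mulVec, one_mulVec, hZ]
  abel

omit [Fintype n] in
theorem isSymm_transpose_mul_self_add_smul_one : (Zᵀ * Z + s • 1).IsSymm := by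
  simp [IsSymm, transpose_add, transpose_mul, transpose_smul, transpose_one]

end Ridge

theorem one_div_mul_dotProduct_sub_self_add_dotProduct_eq [DecidableEq m] [DecidableEq n]
    [Field R] (Z : Matrix m n R) (y : m → R) {s : R} (hs : s ≠ 0)
    (hB : IsUnit (Z * Zᵀ + s • 1).det) {w₀ : n → R} (hw₀ : (Zᵀ * Z + s • 1) *ᵥ w₀ = Zᵀ *ᵥ y)
    (w : n → R) :
    1 / s * ((Z *ᵥ w - y) ⬝ᵥ (Z *ᵥ w - y)) + w ⬝ᵥ w
      = y ⬝ᵥ (Z * Zᵀ + s • 1)⁻¹ *ᵥ y + 1 / s * ((w - w₀) ⬝ᵥ (Zᵀ * Z + s • 1) *ᵥ (w - w₀)) := by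
  have hvalue : y ⬝ᵥ (Z * Zᵀ + s • 1)⁻¹ *ᵥ y = s⁻¹ * (y ⬝ᵥ y - (Zᵀ *ᵥ y) ⬝ᵥ w₀) := by
    have hinv : (Z * Zᵀ + s • 1)⁻¹ *ᵥ y = s⁻¹ • (y - Z *ᵥ w₀) := by
      have h := congrArg ((Z * Zᵀ + s • 1)⁻¹ *ᵥ ·)
        (mul_transpose_add_smul_one_mulVec_sub Z y s hw₀)
      simp only [mulVec_mulVec, nonsing_inv_mul _ hB, one_mulVec, mulVec_smul] at h
      rw [h, inv_smul_smul₀ hs]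
    rw [hinv, dotProduct_smul, dotProduct_sub, dotProduct_mulVec, ← mulVec_transpose, smul_eq_mul]
  rw [hvalue,
    (isSymm_transpose_mul_self_add_smul_one Z s).sub_dotProduct_mulVec_sub_of_mulVec_eq hw₀]
  field_simp
  linear_combination dotProduct_sub_self_add_smul_dotProduct Z y s w

section Real

variable [DecidableEq n] (Z : Matrix m n ℝ) {s : ℝ}

theorem posDef_transpose_mul_self_add_smul_one (hs : 0 < s) : (Zᵀ * Z + s • 1).PosDef := by
  simpa using (PosDef.one.smul hs).posSemidef_add (posSemidef_conjTranspose_mul_self Z)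

theorem isLeast_one_div_mul_dotProduct_sub_self_add_dotProduct [DecidableEq m] (y : m → ℝ)
    (hs : 0 < s) :
    IsLeast {r : ℝ | ∃ w : n → ℝ, r = 1 / s * ((Z *ᵥ w - y) ⬝ᵥ (Z *ᵥ w - y)) + w ⬝ᵥ w}
      (y ⬝ᵥ (Z * Zᵀ + s • 1)⁻¹ *ᵥ y) := by
  have hA := posDef_transpose_mul_self_add_smul_one Z hs
  have hB : IsUnit (Z * Zᵀ + s • 1).det := by
    simpa using (posDef_transpose_mul_self_add_smul_one Zᵀ hs).det_pos.ne'.isUnit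
  set w₀ := (Zᵀ * Z + s • 1)⁻¹ *ᵥ (Zᵀ *ᵥ y)
  have hw₀ : (Zᵀ * Z + s • 1) *ᵥ w₀ = Zᵀ *ᵥ y := by
    rw [mulVec_mulVec, mul_nonsing_inv _ hA.det_pos.ne'.isUnit, one_mulVec]
  have hobj := one_div_mul_dotProduct_sub_self_add_dotProduct_eq Z y hs.ne' hB hw₀
  refine ⟨⟨w₀, by rw [hobj w₀, sub_self, zero_dotProduct, mul_zero, add_zero]⟩, ?_⟩
  rintro r ⟨w, rfl⟩
  rw [hobj w]
  exact le_add_of_nonneg_right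
    (mul_nonneg (by positivity) (hA.posSemidef.dotProduct_mulVec_nonneg (w - w₀)))

theorem log_det_mul_transpose_add_smul_one [DecidableEq m] (hs : 0 < s) :
    Real.log (Z * Zᵀ + s • 1).det
      = Real.log (Zᵀ * Z + s • 1).det + (Fintype.card m - Fintype.card n) * Real.log s := by
  have hA := (posDef_transpose_mul_self_add_smul_one Z hs).det_pos
  have hB := by simpa using (posDef_transpose_mul_self_add_smul_one Zᵀ hs).det_pos
  have h := congrArg Real.log (det_mul_add_smul_one_mul_pow Z Zᵀ s)
  rw [Real.log_mul hB.ne' (by positivity), Real.log_mul hA.ne' (by positivity),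
    Real.log_pow, Real.log_pow] at h
  linear_combination h

end Real

end Matrix

/-- For every real `n × d` matrix `Z`, every `y ∈ ℝⁿ`, and every real `σ > 0`:
`yᵀ (Z Zᵀ + σ² Iₙ)⁻¹ y + log det(Z Zᵀ + σ² Iₙ)
  = (min_w (1/σ²)‖Z w − y‖² + ‖w‖²) + log det(Zᵀ Z + σ² I_d) + (n − d) log σ²`,
where the minimum is attained. -/
theorem log_marginal_likelihood_reformulation (n d : ℕ)
    (Z : Matrix (Fin n) (Fin d) ℝ) (y : Fin n → ℝ) (σ : ℝ) (hσ : 0 < σ) :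
    ∃ m : ℝ,
      IsLeast
        {r : ℝ | ∃ w : Fin d → ℝ,
          r = (1 / σ ^ 2) * ((Z *ᵥ w - y) ⬝ᵥ (Z *ᵥ w - y)) + w ⬝ᵥ w} m ∧
      y ⬝ᵥ (Z * Zᵀ + σ ^ 2 • (1 : Matrix (Fin n) (Fin n) ℝ))⁻¹ *ᵥ y +
          Real.log (Z * Zᵀ + σ ^ 2 • (1 : Matrix (Fin n) (Fin n) ℝ)).det =
        m + Real.log (Zᵀ * Z + σ ^ 2 • (1 : Matrix (Fin d) (Fin d) ℝ)).det +
          ((n : ℝ) - (d : ℝ)) * Real.log (σ ^ 2) := by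
  have hs : 0 < σ ^ 2 := by positivity
  refine ⟨_, isLeast_one_div_mul_dotProduct_sub_self_add_dotProduct Z y hs, ?_⟩
  rw [log_det_mul_transpose_add_smul_one Z hs, Fintype.card_fin, Fintype.card_fin]
  ring
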